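/- arXiv:1704.07316 — 2 statements merged into one kernel-verified Lean document; each statement's English description precedes it below -/
import Mathlib

section
/- Let r be a prime, m a positive integer coprime to r, K a field of characteristic r, and ζ ∈ K a primitive m-th root of unity. For every positive divisor d of m, the image in K[X] of the cyclotomic polynomial Φ_{m/d} ∈ ℤ[X] equals the product ∏_{χ ∈ C(m,r)_d} f_χ(X), where the product runs over all cyclotomic cosets mod r in ℤ/m whose elements have greatest common divisor d with m. -/
/-- The cyclotomic coset mod `r` of `a` in `ℤ/m`: the orbit of `a` under the map
`u ↦ r·u` on `ZMod m`. -/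
noncomputable def cycCoset (r m : ℕ) [NeZero m] (a : ZMod m) : Finset (ZMod m) :=
  (Set.toFinite {b : ZMod m | ∃ k : ℕ, b = (r : ZMod m) ^ k * a}).toFinset

/-- `C(m,r)`: the set of cyclotomic cosets mod `r` in `ℤ/m`. -/
noncomputable def cycCosets (r m : ℕ) [NeZero m] : Finset (Finset (ZMod m)) :=
  Finset.image (cycCoset r m) Finset.univ

/-- `C(m,r)_d`: the set of cyclotomic cosets mod `r` in `ℤ/m` all of whose elements `a`
(represented by `a.val ∈ {0,…,m−1}`) satisfy `gcd(a, m) = d`. -/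
noncomputable def cycCosetsAt (r m d : ℕ) [NeZero m] : Finset (Finset (ZMod m)) :=
  (cycCosets r m).filter (fun χ => ∀ a ∈ χ, Nat.gcd (ZMod.val a) m = d)

section aux

variable {r m : ℕ} [NeZero m]

lemma mem_cycCoset {a b : ZMod m} :
    b ∈ cycCoset r m a ↔ ∃ k : ℕ, b = (r : ZMod m) ^ k * a := by
  simp [cycCoset]

lemma self_mem_cycCoset (a : ZMod m) : a ∈ cycCoset r m a :=
  mem_cycCoset.mpr ⟨0, by simp⟩

lemma r_pow_totient (hrm : Nat.Coprime r m) : (r : ZMod m) ^ m.totient = 1 := by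
  have h := Nat.ModEq.pow_totient hrm
  have h2 := (ZMod.natCast_eq_natCast_iff _ _ m).mpr h
  push_cast at h2
  exact h2

lemma cycCoset_eq_of_mem (hrm : Nat.Coprime r m) {a b : ZMod m}
    (hb : b ∈ cycCoset r m a) : cycCoset r m b = cycCoset r m a := by
  obtain ⟨k, rfl⟩ := mem_cycCoset.mp hb
  have ht : 0 < m.totient := Nat.totient_pos.mpr (NeZero.pos m)
  have hone : (r : ZMod m) ^ m.totient = 1 := r_pow_totient hrm
  ext c
  simp only [mem_cycCoset]
  constructor
  · rintro ⟨j, rfl⟩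
    exact ⟨j + k, by rw [pow_add, mul_assoc]⟩
  · rintro ⟨j, rfl⟩
    refine ⟨j + k * (m.totient - 1), ?_⟩
    have hexp : j + k * (m.totient - 1) + k = j + m.totient * k := by
      have : m.totient - 1 + 1 = m.totient := Nat.succ_pred_eq_of_pos ht
      calc j + k * (m.totient - 1) + k = j + k * (m.totient - 1 + 1) := by ring
        _ = j + m.totient * k := by rw [this]; ring
    rw [← mul_assoc, ← pow_add, hexp, pow_add, pow_mul, hone, one_pow, mul_one]

lemma gcd_eq_on_cycCoset (hrm : Nat.Coprime r m) {a b : ZMod m}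
    (hb : b ∈ cycCoset r m a) : Nat.gcd b.val m = Nat.gcd a.val m := by
  obtain ⟨k, rfl⟩ := mem_cycCoset.mp hb
  have h1 : ((r : ZMod m) ^ k * a) = ((r ^ k * a.val : ℕ) : ZMod m) := by
    push_cast [ZMod.natCast_val, ZMod.cast_id]
    ring
  rw [h1, ZMod.val_natCast, ← Nat.gcd_rec, Nat.gcd_comm m,
    (hrm.pow_left k).gcd_mul_left_cancel a.val]

end aux

open Polynomial in
/-- Let `r` be a prime, `m` a positive integer coprime to `r`, `K` a field of
characteristic `r` and `ζ ∈ K` a primitive `m`-th root of unity.  For every positive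
divisor `d` of `m`, the image in `K[X]` of the cyclotomic polynomial `Φ_{m/d} ∈ ℤ[X]`
equals `∏_{χ ∈ C(m,r)_d} f_χ(X)`, where `f_χ(X) = ∏_{u ∈ χ} (X − ζ^u)`. -/
theorem stmt3 {r m : ℕ} [NeZero m] (hr : r.Prime) (hrm : Nat.Coprime r m)
    {K : Type*} [Field K] [CharP K r] {ζ : K} (hζ : IsPrimitiveRoot ζ m)
    {d : ℕ} (hd : d ∣ m) (hd0 : 0 < d) :
    Polynomial.map (Int.castRingHom K) (Polynomial.cyclotomic (m / d) ℤ) =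
      ∏ χ ∈ cycCosetsAt r m d, ∏ u ∈ χ,
        (Polynomial.X - Polynomial.C (ζ ^ u.val)) := by
  classical
  have hm : 0 < m := NeZero.pos m
  have hmd : 0 < m / d := Nat.div_pos (Nat.le_of_dvd hm hd) hd0
  haveI : NeZero (m / d) := ⟨hmd.ne'⟩
  have hmdd : m = d * (m / d) := (Nat.mul_div_cancel' hd).symm
  have hζd : IsPrimitiveRoot (ζ ^ d) (m / d) := hζ.pow hm hmdd
  rw [map_cyclotomic_int, Polynomial.cyclotomic_eq_prod_X_sub_primitiveRoots hζd]
  set S : Finset (ZMod m) := Finset.univ.filter (fun u => Nat.gcd u.val m = d) with hS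
  -- the cosets in `cycCosetsAt r m d` partition `S`
  have hbi : (cycCosetsAt r m d).biUnion id = S := by
    ext u
    simp only [Finset.mem_biUnion, id, hS, Finset.mem_filter, Finset.mem_univ, true_and]
    constructor
    · rintro ⟨χ, hχ, hu⟩
      exact (Finset.mem_filter.mp hχ).2 u hu
    · intro hu
      refine ⟨cycCoset r m u, ?_, self_mem_cycCoset u⟩
      rw [cycCosetsAt, Finset.mem_filter]
      exact ⟨Finset.mem_image_of_mem _ (Finset.mem_univ u),
        fun a ha => by rw [gcd_eq_on_cycCoset hrm ha, hu]⟩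
  have hdisj : (cycCosetsAt r m d : Set (Finset (ZMod m))).PairwiseDisjoint id := by
    intro χ₁ h₁ χ₂ h₂ hne
    simp only [Function.onFun, id]
    rw [Finset.disjoint_left]
    intro b hb₁ hb₂
    have hc₁ : χ₁ ∈ cycCosets r m :=
      (Finset.mem_filter.mp (Finset.mem_coe.mp h₁)).1
    have hc₂ : χ₂ ∈ cycCosets r m :=
      (Finset.mem_filter.mp (Finset.mem_coe.mp h₂)).1
    obtain ⟨a₁, -, rfl⟩ := Finset.mem_image.mp hc₁
    obtain ⟨a₂, -, rfl⟩ := Finset.mem_image.mp hc₂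
    exact hne (by rw [← cycCoset_eq_of_mem hrm hb₁, cycCoset_eq_of_mem hrm hb₂])
  have hprod : ∏ χ ∈ cycCosetsAt r m d, ∏ u ∈ χ, (X - C (ζ ^ u.val))
      = ∏ u ∈ S, (X - C (ζ ^ u.val)) := by
    rw [← hbi]
    exact (Finset.prod_biUnion hdisj).symm
  rw [hprod]
  -- the primitive (m/d)-th roots of unity are exactly the `ζ ^ u.val` for `u ∈ S`
  have himg : primitiveRoots (m / d) K = S.image (fun u : ZMod m => ζ ^ u.val) := by
    ext μ
    simp only [Finset.mem_image, mem_primitiveRoots hmd, hS, Finset.mem_filter,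
      Finset.mem_univ, true_and]
    constructor
    · intro hμ
      obtain ⟨i, hi, rfl⟩ := hζd.eq_pow_of_pow_eq_one hμ.pow_eq_one
      have hcop : Nat.Coprime i (m / d) := (hζd.pow_iff_coprime hmd i).mp hμ
      refine ⟨((d * i : ℕ) : ZMod m), ?_, ?_⟩
      · rw [ZMod.val_natCast, ← Nat.gcd_rec, Nat.gcd_comm m]
        calc Nat.gcd (d * i) m = Nat.gcd (d * i) (d * (m / d)) := by rw [← hmdd]
          _ = d * Nat.gcd i (m / d) := Nat.gcd_mul_left d i (m / d)
          _ = d := by rw [hcop, mul_one]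
      · rw [ZMod.val_natCast, ← pow_mul]
        conv_rhs => rw [← Nat.mod_add_div (d * i) m]
        rw [pow_add, pow_mul ζ m, hζ.pow_eq_one, one_pow, mul_one]
    · rintro ⟨u, hu, rfl⟩
      have hdu : d ∣ u.val := hu ▸ Nat.gcd_dvd_left u.val m
      obtain ⟨c, hc⟩ := hdu
      have hcop : Nat.Coprime c (m / d) := by
        have h2 : Nat.gcd (d * c) (d * (m / d)) = d * Nat.gcd c (m / d) :=
          Nat.gcd_mul_left d c (m / d)
        have h3 : Nat.gcd (d * c) (d * (m / d)) = d := by rw [← hmdd, ← hc, hu]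
        have h4 : d * Nat.gcd c (m / d) = d * 1 := by rw [mul_one, ← h2, h3]
        exact Nat.eq_of_mul_eq_mul_left hd0 h4
      have := hζd.pow_of_coprime c hcop
      rwa [← pow_mul, ← hc] at this
  have hinj : ∀ u ∈ S, ∀ v ∈ S, ζ ^ u.val = ζ ^ v.val → u = v := by
    intro u _ v _ h
    have := hζ.pow_inj (ZMod.val_lt u) (ZMod.val_lt v) h
    exact ZMod.val_injective m this
  rw [himg, Finset.prod_image hinj]
end

section
/- Let r be a prime, m a positive integer coprime to r, and d a positive divisor of m. For every a ∈ ℤ/m whose representative in {0,…,m−1} satisfies gcd(a, m) = d, the cardinality of the orbit of a under the map u ↦ r·u on ℤ/m equals the multiplicative order of r modulo m/d, i.e. the order of the unit r in (ℤ/(m/d))ˣ. -/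
/-- Let `r` be a prime, `m` a positive integer coprime to `r`, and `d` a
positive divisor of `m`.  For every `a ∈ ℤ/m` whose representative in `{0,…,m−1}`
satisfies `gcd(a, m) = d`, the cardinality of the orbit of `a` under `u ↦ r·u` on `ℤ/m`
equals the multiplicative order of `r` modulo `m/d`, i.e. the least positive integer `f`
with `r^f ≡ 1 (mod m/d)`. -/
theorem stmt6 {r m : ℕ} [NeZero m] (hr : r.Prime) (hrm : Nat.Coprime r m)
    {d : ℕ} (hd : d ∣ m) (hd0 : 0 < d)
    (a : ZMod m) (ha : Nat.gcd a.val m = d) :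
    (cycCoset r m a).card = orderOf ((r : ZMod (m / d))) := by
  classical
  have hm0 : 0 < m := Nat.pos_of_ne_zero (NeZero.ne m)
  have hm'0 : 0 < m / d := Nat.div_pos (Nat.le_of_dvd hm0 hd) hd0
  haveI : NeZero (m / d) := ⟨hm'0.ne'⟩
  have hrpos : 0 < r := hr.pos
  have hrm' : Nat.Coprime r (m / d) := hrm.coprime_dvd_right (Nat.div_dvd_of_dvd hd)
  set n := orderOf ((r : ZMod (m / d))) with hn
  -- n is positive
  have hnpos : 0 < n := by
    have : (ZMod.unitOfCoprime r hrm' : ZMod (m / d)) = (r : ZMod (m / d)) := rfl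
    rw [hn, ← this, orderOf_units]
    exact orderOf_pos _
  -- key characterization
  have key : ∀ k : ℕ, (r : ZMod m) ^ k * a = a ↔ n ∣ k := by
    intro k
    have hrk1 : 1 ≤ r ^ k := Nat.one_le_pow _ _ hrpos
    have step1 : ((r : ZMod m) ^ k * a = a) ↔ ((r ^ k * a.val : ℕ) : ZMod m) = ((a.val : ℕ) : ZMod m) := by
      push_cast
      rw [ZMod.natCast_val, ZMod.cast_id]
    rw [step1, ZMod.natCast_eq_natCast_iff]
    have step2 : (r ^ k * a.val) ≡ a.val [MOD m] ↔ m ∣ (r ^ k - 1) * a.val := by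
      constructor
      · intro h
        have := (Nat.modEq_iff_dvd' (Nat.le_mul_of_pos_left a.val hrk1)).mp h.symm
        convert this using 1
        rw [Nat.sub_mul, one_mul]
      · intro h
        have : a.val ≡ r ^ k * a.val [MOD m] := by
          rw [Nat.modEq_iff_dvd' (Nat.le_mul_of_pos_left a.val hrk1)]
          convert h using 1
          rw [Nat.sub_mul, one_mul]
        exact this.symm
    rw [step2]
    -- rewrite a.val = d * a', m = d * m'
    have hda : d ∣ a.val := ha ▸ Nat.gcd_dvd_left _ _
    obtain ⟨a', ha'⟩ := hda
    obtain ⟨m', hm'⟩ := hd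
    have hm'eq : m / d = m' := by rw [hm', Nat.mul_div_cancel_left _ hd0]
    have hcop : Nat.Coprime a' m' := by
      have := Nat.coprime_div_gcd_div_gcd (m := a.val) (n := m) (ha ▸ hd0)
      rwa [ha, ha', hm', Nat.mul_div_cancel_left _ hd0, Nat.mul_div_cancel_left _ hd0] at this
    have step3 : m ∣ (r ^ k - 1) * a.val ↔ m' ∣ r ^ k - 1 := by
      rw [ha', hm']
      have h1 : (r ^ k - 1) * (d * a') = d * ((r ^ k - 1) * a') := by ring
      rw [h1, Nat.mul_dvd_mul_iff_left hd0]
      constructor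
      · intro h
        exact (Nat.Coprime.dvd_of_dvd_mul_right (hcop.symm) h)
      · intro h
        exact h.mul_right _
    rw [step3]
    have step4 : m' ∣ r ^ k - 1 ↔ (r : ZMod (m / d)) ^ k = 1 := by
      rw [hm'eq]
      rw [show ((r : ZMod m') ^ k = 1) ↔ (((r ^ k : ℕ) : ZMod m') = ((1 : ℕ) : ZMod m')) by push_cast; rfl]
      rw [ZMod.natCast_eq_natCast_iff]
      constructor
      · intro h
        exact ((Nat.modEq_iff_dvd' hrk1).mpr h).symm
      · intro h
        exact (Nat.modEq_iff_dvd' hrk1).mp h.symm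
    rw [step4, hn, orderOf_dvd_iff_pow_eq_one]
  -- the coset is the image of range n
  have himg : cycCoset r m a = (Finset.range n).image (fun k => (r : ZMod m) ^ k * a) := by
    ext b
    simp only [cycCoset, Set.Finite.mem_toFinset, Set.mem_setOf_eq, Finset.mem_image,
      Finset.mem_range]
    constructor
    · rintro ⟨k, rfl⟩
      refine ⟨k % n, Nat.mod_lt _ hnpos, ?_⟩
      have hk : (r : ZMod m) ^ (n * (k / n)) * a = a := (key _).mpr ⟨k / n, rfl⟩
      calc (r : ZMod m) ^ (k % n) * a
          = (r : ZMod m) ^ (k % n) * ((r : ZMod m) ^ (n * (k / n)) * a) := by rw [hk]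
        _ = (r : ZMod m) ^ (k % n + n * (k / n)) * a := by rw [pow_add, mul_assoc]
        _ = (r : ZMod m) ^ k * a := by rw [Nat.mod_add_div]
    · rintro ⟨k, _, rfl⟩
      exact ⟨k, rfl⟩
  rw [himg, Finset.card_image_of_injOn, Finset.card_range]
  -- injectivity on range n
  intro k hk j hj hkj
  simp only [Finset.mem_coe, Finset.mem_range] at hk hj
  simp only at hkj
  have hu : IsUnit ((r : ZMod m)) := (ZMod.isUnit_iff_coprime r m).mpr hrm
  have main : ∀ k j : ℕ, k < n → j < n → k ≤ j →
      (r : ZMod m) ^ k * a = (r : ZMod m) ^ j * a → k = j := by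
    intro k j hk hj hle hkj
    have hsplit : (r : ZMod m) ^ k * ((r : ZMod m) ^ (j - k) * a) = (r : ZMod m) ^ k * a := by
      rw [← mul_assoc, ← pow_add, Nat.add_sub_cancel' hle, ← hkj]
    have hcancel : (r : ZMod m) ^ (j - k) * a = a := (hu.pow k).mul_left_cancel hsplit
    have hdvd : n ∣ j - k := (key _).mp hcancel
    have hz : j - k = 0 := Nat.eq_zero_of_dvd_of_lt hdvd (lt_of_le_of_lt (Nat.sub_le _ _) hj)
    omega
  rcases le_total k j with h | h
  · exact main k j hk hj h hkj
  · exact (main j k hj hk h hkj.symm).symm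
end
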